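/- arXiv:1308.6175 — 4 statements merged into one kernel-verified Lean document; each statement's English description precedes it below -/
import Mathlib

section
/- Let C_0 ⊆ C_1 ⊆ ... ⊆ C_{a-1} ⊆ C_a = (ZMod 2)^n be a family of nested binary linear codes, and let b_1, ..., b_n be a basis of (ZMod 2)^n such that b_1, ..., b_{k_i} span C_i (where k_i = dim C_i). Then the Construction D set Λ_D is an additive subgroup of ℤ^n; that is, Construction D always produces a lattice. -/
noncomputable section

/-- The natural embedding of `(ZMod 2)^n` into `ℤ^n`, applying coordinatewise the map
sending `0` to `0` and `1` to `1`. -/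
def psi {n : ℕ} (x : Fin n → ZMod 2) : Fin n → ℤ := fun k => ((x k).val : ℤ)

/-- The basis `b` of `(ZMod 2)^n` is such that its first `k_i = dim C_i` vectors
`b_1, ..., b_{k_i}` span `C_i`, for each `i < a`. -/
def SpansChain {n : ℕ} (a : ℕ) (C : ℕ → Submodule (ZMod 2) (Fin n → ZMod 2))
    (b : Module.Basis (Fin n) (ZMod 2) (Fin n → ZMod 2)) : Prop :=
  ∀ i < a, Submodule.span (ZMod 2)
      ((fun j => b j) '' {j : Fin n | (j : ℕ) < Module.finrank (ZMod 2) (C i)}) = C i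

/-- The Construction D set `Λ_D` associated to a chain of codes `C` and a basis `b`:
all vectors `Σ_{i<a} 2^i Σ_{j ≤ k_i} α_j^{(i)} ψ(b_j) + 2^a l` with `α_j^{(i)} ∈ {0,1}`,
`l ∈ ℤ^n`, and `k_i = dim C_i`. -/
def LambdaD {n : ℕ} (a : ℕ) (C : ℕ → Submodule (ZMod 2) (Fin n → ZMod 2))
    (b : Module.Basis (Fin n) (ZMod 2) (Fin n → ZMod 2)) : Set (Fin n → ℤ) :=
  { x | ∃ (α : ℕ → Fin n → ℤ) (l : Fin n → ℤ),
      (∀ i j, α i j = 0 ∨ α i j = 1) ∧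
      x = (∑ i ∈ Finset.range a, (2 ^ i : ℤ) •
            ∑ j ∈ Finset.univ.filter
                (fun j : Fin n => (j : ℕ) < Module.finrank (ZMod 2) (C i)),
              α i j • psi (b j)) + (2 ^ a : ℤ) • l }


/-! Integer coefficients give the same set as binary ones, so `Λ_D` is the image of the
additive map `(m, l) ↦ Σ_{i<a} 2^i Σ_{j<k_i} m_{ij} ψ(b_j) + 2^a l`. To reduce a coefficient `m`
at level `i`, write it as `m % 2 + 2 (m / 2)` and carry `2^{i+1} (m / 2) ψ(b_j)` to level `i + 1`,
which has `ψ(b_j)` among its generators because `k_i ≤ k_{i+1}`; at the top level the carry is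
absorbed by `2^a ℤ^n`. -/

section ConstructionD

variable {ι M : Type*} [AddCommGroup M] (v : ι → M)

def levelSum (t : Finset ι) (c : ι → ℤ) : M := ∑ j ∈ t, c j • v j

def constructionDSum (a : ℕ) (s : ℕ → Finset ι) (m : ℕ → ι → ℤ) (l : M) : M :=
  (∑ i ∈ Finset.range a, (2 ^ i : ℤ) • levelSum v (s i) (m i)) + (2 ^ a : ℤ) • l

lemma levelSum_add (t : Finset ι) (c c' : ι → ℤ) :
    levelSum v t (c + c') = levelSum v t c + levelSum v t c' := by
  simp only [levelSum, Pi.add_apply, add_smul, Finset.sum_add_distrib]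

lemma levelSum_indicator {t u : Finset ι} (htu : t ⊆ u) (c : ι → ℤ) :
    levelSum v u ((t : Set ι).indicator c) = levelSum v t c := by
  simp only [levelSum, ← Set.indicator_smul_apply_left, Finset.sum_indicator_subset _ htu]

lemma levelSum_eq_mod_two_add (t : Finset ι) (c : ι → ℤ) :
    levelSum v t c =
      levelSum v t (fun j => c j % 2) + (2 : ℤ) • levelSum v t (fun j => c j / 2) := by
  simp only [levelSum, Finset.smul_sum, smul_smul, ← Finset.sum_add_distrib, ← add_smul,
    Int.emod_add_mul_ediv]

lemma constructionDSum_zero (s : ℕ → Finset ι) (m : ℕ → ι → ℤ) (l : M) :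
    constructionDSum v 0 s m l = l := by
  simp [constructionDSum]

lemma constructionDSum_succ (a : ℕ) (s : ℕ → Finset ι) (m : ℕ → ι → ℤ) (l : M) :
    constructionDSum v (a + 1) s m l = levelSum v (s 0) (m 0) +
      (2 : ℤ) • constructionDSum v a (fun i => s (i + 1)) (fun i => m (i + 1)) l := by
  simp only [constructionDSum, Finset.sum_range_succ', pow_succ', mul_smul, smul_add,
    Finset.smul_sum, pow_zero, one_smul]
  abel

lemma constructionDSum_add (a : ℕ) (s : ℕ → Finset ι) (m m' : ℕ → ι → ℤ) (l l' : M) :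
    constructionDSum v a s (m + m') (l + l') =
      constructionDSum v a s m l + constructionDSum v a s m' l' := by
  simp only [constructionDSum, Pi.add_apply, levelSum_add, smul_add, Finset.sum_add_distrib]
  abel

def constructionDHom (a : ℕ) (s : ℕ → Finset ι) : (ℕ → ι → ℤ) × M →+ M :=
  AddMonoidHom.mk' (fun p => constructionDSum v a s p.1 p.2) fun p q =>
    constructionDSum_add v a s p.1 q.1 p.2 q.2

lemma exists_levelSum_add_constructionDSum_eq {a : ℕ} {s : ℕ → Finset ι} {t : Finset ι}
    (hts : 0 < a → t ⊆ s 0) (c : ι → ℤ) (m : ℕ → ι → ℤ) (l : M) :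
    ∃ m' l', levelSum v t c + constructionDSum v a s m l = constructionDSum v a s m' l' := by
  cases a with
  | zero =>
    refine ⟨m, l + levelSum v t c, ?_⟩
    rw [constructionDSum_zero, constructionDSum_zero, add_comm]
  | succ a =>
    refine ⟨fun | 0 => m 0 + (t : Set ι).indicator c | i + 1 => m (i + 1), l, ?_⟩
    rw [constructionDSum_succ, constructionDSum_succ, levelSum_add,
      levelSum_indicator v (hts a.succ_pos)]
    change _ = _ + (2 : ℤ) • constructionDSum v a (fun i => s (i + 1)) (fun i => m (i + 1)) l
    abel

theorem exists_binary_constructionDSum_eq {a : ℕ} {s : ℕ → Finset ι}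
    (hs : ∀ i, i + 1 < a → s i ⊆ s (i + 1)) (m : ℕ → ι → ℤ) (l : M) :
    ∃ (α : ℕ → ι → ℤ) (l' : M), (∀ i j, α i j = 0 ∨ α i j = 1) ∧
      constructionDSum v a s m l = constructionDSum v a s α l' := by
  induction a generalizing s m l with
  | zero => exact ⟨0, l, fun _ _ => Or.inl rfl, by simp only [constructionDSum_zero]⟩
  | succ a ih =>
    obtain ⟨m', l', hcarry⟩ := exists_levelSum_add_constructionDSum_eq v (a := a)
      (s := fun i => s (i + 1)) (fun ha => hs 0 (by omega)) (fun j => m 0 j / 2)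
      (fun i => m (i + 1)) l
    obtain ⟨α, l'', hα, hαeq⟩ := ih (fun i hi => hs (i + 1) (by omega)) m' l'
    refine ⟨fun | 0 => fun j => m 0 j % 2 | i + 1 => α i, l'', ?_, ?_⟩
    · rintro (_ | i) j
      · exact Int.emod_two_eq_zero_or_one _
      · exact hα i j
    · rw [constructionDSum_succ, constructionDSum_succ, levelSum_eq_mod_two_add, add_assoc,
        ← smul_add, hcarry, hαeq]

theorem constructionD_eq_range {a : ℕ} {s : ℕ → Finset ι}
    (hs : ∀ i, i + 1 < a → s i ⊆ s (i + 1)) :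
    {x | ∃ (α : ℕ → ι → ℤ) (l : M), (∀ i j, α i j = 0 ∨ α i j = 1) ∧
      x = constructionDSum v a s α l} = (constructionDHom v a s).range := by
  ext x
  constructor
  · rintro ⟨α, l, -, rfl⟩
    exact ⟨(α, l), rfl⟩
  · rintro ⟨⟨m, l⟩, rfl⟩
    obtain ⟨α, l', hα, h⟩ := exists_binary_constructionDSum_eq v hs m l
    exact ⟨α, l', hα, h⟩

end ConstructionD

theorem lambdaD_is_lattice_general {n a : ℕ} (C : ℕ → Submodule (ZMod 2) (Fin n → ZMod 2))
    (hmono : ∀ i < a, C i ≤ C (i + 1))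
    (b : Module.Basis (Fin n) (ZMod 2) (Fin n → ZMod 2)) :
    ∃ G : AddSubgroup (Fin n → ℤ), (G : Set (Fin n → ℤ)) = LambdaD a C b := by
  have hs : ∀ i, i + 1 < a →
      Finset.univ.filter (fun j : Fin n => (j : ℕ) < Module.finrank (ZMod 2) (C i)) ⊆
        Finset.univ.filter (fun j : Fin n => (j : ℕ) < Module.finrank (ZMod 2) (C (i + 1))) :=
    fun i hi => Finset.monotone_filter_right _
      fun _ _ hj => hj.trans_le (Submodule.finrank_mono (hmono i (by omega)))
  exact ⟨_, (constructionD_eq_range (fun j => psi (b j)) hs).symm⟩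

/-- For a family of nested binary linear codes
`C₀ ⊆ C₁ ⊆ ... ⊆ C_{a-1} ⊆ C_a = (ZMod 2)^n` and a basis `b` of `(ZMod 2)^n` whose first
`k_i` vectors span `C_i`, the Construction D set `Λ_D` is an additive subgroup of `ℤ^n`:
Construction D always produces a lattice. -/
theorem lambdaD_is_lattice {n a : ℕ} (C : ℕ → Submodule (ZMod 2) (Fin n → ZMod 2))
    (hmono : ∀ i < a, C i ≤ C (i + 1)) (htop : C a = ⊤)
    (b : Module.Basis (Fin n) (ZMod 2) (Fin n → ZMod 2)) (hb : SpansChain a C b) :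
    ∃ G : AddSubgroup (Fin n → ℤ), (G : Set (Fin n → ℤ)) = LambdaD a C b :=
  lambdaD_is_lattice_general C hmono b
end
end

section
/- Let C_0 ⊆ C_1 ⊆ ... ⊆ C_{a-1} ⊆ C_a = (ZMod 2)^n be a family of nested binary linear codes. Then the additive subgroup of ℤ^n generated by the union of all Construction D sets Λ_D — where the union ranges over all bases b_1, ..., b_n of (ZMod 2)^n such that b_1, ..., b_{k_i} span C_i for each i — equals Λ_CF, the smallest additive subgroup of ℤ^n containing Γ_CF. -/
noncomputable section

/-- The code formula set `Γ_CF = ψ(C₀) + 2ψ(C₁) + ... + 2^{a-1}ψ(C_{a-1}) + 2^a ℤ^n`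
associated to a chain of binary codes `C₀ ⊆ C₁ ⊆ ... ⊆ C_a = (ZMod 2)^n`. -/
def GammaCF {n : ℕ} (a : ℕ) (C : ℕ → Submodule (ZMod 2) (Fin n → ZMod 2)) :
    Set (Fin n → ℤ) :=
  { x | ∃ (c : ℕ → Fin n → ZMod 2) (l : Fin n → ℤ),
      (∀ i < a, c i ∈ C i) ∧
      x = (∑ i ∈ Finset.range a, (2 ^ i : ℤ) • psi (c i)) + (2 ^ a : ℤ) • l }

/-!
Every `Λ_D` lies in `Λ_CF`, because `b_j ∈ C_i` for `j < k_i`, so each `2^i ψ(b_j)` lies in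
`Γ_CF`. Conversely, `Λ_CF` is generated by `2^a ℤ^n` and the vectors `2^i ψ(c)` with `c ∈ C_i`, so
it suffices to make every nonzero `c ∈ C_i` one of the first `k_i` vectors of some basis adapted
to the chain. An adapted basis exists: choose `b_j` greedily outside the span of
`b_0, …, b_{j-1}` inside the smallest `C_i` with `j < k_i`. Given one, replacing `b_{j₀}` by `c`,
where `j₀` is the largest index in the support of `c`, again gives an adapted basis.
-/

open Module Submodule

section AdaptedBasis

variable {K V : Type*} [Field K] [AddCommGroup V] [Module K V] {n : ℕ}

/-- The membership form of `SpansChain`; the two agree by `span_image_lt_finrank_eq`. -/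
def IsAdaptedBasis (a : ℕ) (C : ℕ → Submodule K V) (b : Basis (Fin n) K V) : Prop :=
  ∀ i < a, ∀ j : Fin n, (j : ℕ) < finrank K (C i) → b j ∈ C i

theorem span_image_lt_finrank_eq (b : Basis (Fin n) K V) {W : Submodule K V}
    (hW : ∀ j : Fin n, (j : ℕ) < finrank K W → b j ∈ W) :
    span K (b '' {j | (j : ℕ) < finrank K W}) = W := by
  have : FiniteDimensional K V := Module.Finite.of_basis b
  have hle : finrank K W ≤ n := by
    simpa [finrank_eq_card_basis b] using Submodule.finrank_le W
  rw [← Fin.range_castLE hle, ← Set.range_comp]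
  refine eq_of_le_of_finrank_eq (span_le.2 ?_) ?_
  · rintro _ ⟨j, rfl⟩
    exact hW _ j.2
  · rw [finrank_span_eq_card (b.linearIndependent.comp _ (Fin.castLE_injective hle)),
      Fintype.card_fin]

theorem exists_linearIndependent_forall_mem :
    ∀ {n : ℕ} (W : Fin n → Submodule K V), (∀ j : Fin n, (j : ℕ) < finrank K (W j)) →
      ∃ v : Fin n → V, LinearIndependent K v ∧ ∀ j, v j ∈ W j
  | 0, _, _ => ⟨Fin.elim0, linearIndependent_empty_type, fun j => j.elim0⟩
  | n + 1, W, hW => by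
    obtain ⟨v, hv, hvW⟩ :=
      exists_linearIndependent_forall_mem (W ∘ Fin.castSucc) fun j => hW j.castSucc
    obtain ⟨x, hxW, hxv⟩ : ∃ x ∈ W (Fin.last n), x ∉ span K (Set.range v) := by
      by_contra! h
      have := FiniteDimensional.span_of_finite K (Set.finite_range v)
      have hle := (Submodule.finrank_mono h).trans_eq (finrank_span_eq_card hv)
      have hlast := hW (Fin.last n)
      simp only [Fin.val_last, Fintype.card_fin] at hle hlast
      omega
    refine ⟨Fin.snoc v x, linearIndependent_finSnoc.2 ⟨hv, hxv⟩, Fin.lastCases ?_ fun j => ?_⟩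
    · simpa using hxW
    · simpa using hvW j

theorem exists_isAdaptedBasis [FiniteDimensional K V] (hn : finrank K V = n) {a : ℕ}
    {C : ℕ → Submodule K V} (hmono : ∀ i < a, C i ≤ C (i + 1)) (htop : C a = ⊤) :
    ∃ b : Basis (Fin n) K V, IsAdaptedBasis a C b := by
  classical
  have hlevel (j : Fin n) : ∃ i, (j : ℕ) < finrank K (C i) :=
    ⟨a, by rw [htop, finrank_top, hn]; exact j.2⟩
  obtain ⟨v, hv, hvC⟩ := exists_linearIndependent_forall_mem
    (fun j => C (Nat.find (hlevel j))) fun j => Nat.find_spec (hlevel j)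
  have hC : MonotoneOn C (Set.Iic a) := monotoneOn_of_le_succ Set.ordConnected_Iic
    fun i _ _ hi => hmono i (Order.succ_le_iff.1 hi)
  refine ⟨basisOfLinearIndependentOfCardEqFinrank' v hv (by simp [hn]), fun i hi j hj => ?_⟩
  rw [coe_basisOfLinearIndependentOfCardEqFinrank']
  have hji : Nat.find (hlevel j) ≤ i := Nat.find_min' _ hj
  exact hC (hji.trans hi.le : _ ≤ a) (hi.le : i ≤ a) hji (hvC j)

theorem IsAdaptedBasis.exists_apply_eq {a : ℕ} {C : ℕ → Submodule K V} {b : Basis (Fin n) K V}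
    (hb : IsAdaptedBasis a C b) {m : ℕ} (hm : m < a) {c : V} (hc : c ∈ C m) (hc0 : c ≠ 0) :
    ∃ b' : Basis (Fin n) K V, IsAdaptedBasis a C b' ∧
      ∃ j : Fin n, (j : ℕ) < finrank K (C m) ∧ b' j = c := by
  classical
  have : FiniteDimensional K V := Module.Finite.of_basis b
  have hmem {i : ℕ} (hi : i < a) (x : V) :
      x ∈ C i ↔ ∀ j ∈ (b.repr x).support, (j : ℕ) < finrank K (C i) := by
    conv_lhs => rw [← span_image_lt_finrank_eq b (hb i hi), b.mem_span_image]
    rfl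
  have hsupp : (b.repr c).support.Nonempty := by simpa using hc0
  set j₀ := (b.repr c).support.max' hsupp
  have hj₀ : b.repr c j₀ ≠ 0 := Finsupp.mem_support_iff.1 (Finset.max'_mem _ _)
  have hv : LinearIndependent K (Function.update b j₀ c) :=
    b.linearIndependent.update j₀ c ⟨1, one_mem _, b.repr c, mem_nonZeroDivisors_of_ne_zero hj₀,
      by rw [one_smul, b.linearCombination_repr]⟩
  refine ⟨basisOfLinearIndependentOfCardEqFinrank' _ hv (by simp [finrank_eq_card_basis b]),
    fun i hi j hj => ?_, j₀, (hmem hm c).1 hc j₀ (Finset.max'_mem _ _), by simp⟩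
  rw [coe_basisOfLinearIndependentOfCardEqFinrank']
  rcases eq_or_ne j j₀ with rfl | hne
  · rw [Function.update_self]
    exact (hmem hi c).2 fun k hk => (Fin.le_def.1 (Finset.le_max' _ k hk)).trans_lt hj
  · rw [Function.update_of_ne hne]
    exact hb i hi j hj

end AdaptedBasis

section CodeLattices

variable {n a : ℕ} {C : ℕ → Submodule (ZMod 2) (Fin n → ZMod 2)}

theorem IsAdaptedBasis.spansChain {b : Basis (Fin n) (ZMod 2) (Fin n → ZMod 2)}
    (hb : IsAdaptedBasis a C b) : SpansChain a C b :=
  fun i hi => span_image_lt_finrank_eq b (hb i hi)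

@[simp]
lemma psi_zero : psi (0 : Fin n → ZMod 2) = 0 := by
  ext; simp [psi]

lemma two_pow_smul_psi_mem_gammaCF {i : ℕ} (hi : i < a) {c : Fin n → ZMod 2} (hc : c ∈ C i) :
    (2 ^ i : ℤ) • psi c ∈ GammaCF a C := by
  classical
  refine ⟨Function.update 0 i c, 0, fun k _ => ?_, ?_⟩
  · rcases eq_or_ne k i with rfl | hk
    · simpa
    · simp [hk]
  · rw [Finset.sum_eq_single_of_mem i (Finset.mem_range.2 hi) fun k _ hk => by simp [hk]]
    simp

lemma two_pow_smul_mem_gammaCF (l : Fin n → ℤ) : (2 ^ a : ℤ) • l ∈ GammaCF a C :=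
  ⟨0, l, fun k _ => (C k).zero_mem, by simp⟩

lemma two_pow_smul_psi_basis_mem_lambdaD (b : Basis (Fin n) (ZMod 2) (Fin n → ZMod 2))
    {i : ℕ} (hi : i < a) {j : Fin n} (hj : (j : ℕ) < finrank (ZMod 2) (C i)) :
    (2 ^ i : ℤ) • psi (b j) ∈ LambdaD a C b := by
  classical
  refine ⟨Pi.single i (Pi.single j 1), 0, fun i' j' => ?_, ?_⟩
  · rcases eq_or_ne i' i with rfl | hi'
    · rcases eq_or_ne j' j with rfl | hj' <;> simp [*]
    · simp [hi']
  · rw [smul_zero, add_zero,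
      Finset.sum_eq_single_of_mem i (Finset.mem_range.2 hi) fun k _ hk => by simp [hk],
      Finset.sum_eq_single_of_mem j (Finset.mem_filter.2 ⟨Finset.mem_univ _, hj⟩)
        fun k _ hk => by simp [hk]]
    simp

lemma two_pow_smul_mem_lambdaD (b : Basis (Fin n) (ZMod 2) (Fin n → ZMod 2)) (l : Fin n → ℤ) :
    (2 ^ a : ℤ) • l ∈ LambdaD a C b :=
  ⟨0, l, fun _ _ => Or.inl rfl, by simp⟩

theorem lambdaD_subset_closure_gammaCF {b : Basis (Fin n) (ZMod 2) (Fin n → ZMod 2)}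
    (hb : SpansChain a C b) : LambdaD a C b ⊆ AddSubgroup.closure (GammaCF a C) := by
  rintro _ ⟨α, l, -, rfl⟩
  refine add_mem (sum_mem fun i hi => ?_)
    (AddSubgroup.subset_closure (two_pow_smul_mem_gammaCF l))
  rw [Finset.mem_range] at hi
  rw [Finset.smul_sum]
  refine sum_mem fun j hj => ?_
  have hbj : b j ∈ C i := hb i hi ▸ subset_span ⟨j, (Finset.mem_filter.1 hj).2, rfl⟩
  rw [smul_comm]
  exact zsmul_mem (AddSubgroup.subset_closure (two_pow_smul_psi_mem_gammaCF hi hbj)) _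

theorem gammaCF_subset_closure_iUnion_lambdaD (hmono : ∀ i < a, C i ≤ C (i + 1))
    (htop : C a = ⊤) :
    GammaCF a C ⊆ AddSubgroup.closure
      (⋃ (b : Basis (Fin n) (ZMod 2) (Fin n → ZMod 2)) (_ : SpansChain a C b), LambdaD a C b) := by
  have hmem {b : Basis (Fin n) (ZMod 2) (Fin n → ZMod 2)} (hb : IsAdaptedBasis a C b) {x}
      (hx : x ∈ LambdaD a C b) : x ∈ AddSubgroup.closure
        (⋃ (b : Basis (Fin n) (ZMod 2) (Fin n → ZMod 2)) (_ : SpansChain a C b),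
          LambdaD a C b) :=
    AddSubgroup.subset_closure (Set.mem_iUnion₂.2 ⟨b, hb.spansChain, hx⟩)
  obtain ⟨b₀, hb₀⟩ := exists_isAdaptedBasis (Module.finrank_fin_fun (ZMod 2)) hmono htop
  rintro _ ⟨c, l, hc, rfl⟩
  refine add_mem (sum_mem fun i hi => ?_) (hmem hb₀ (two_pow_smul_mem_lambdaD b₀ l))
  rw [Finset.mem_range] at hi
  rcases eq_or_ne (c i) 0 with h0 | h0
  · simp [h0]
  obtain ⟨b, hb, j, hj, hbj⟩ := hb₀.exists_apply_eq hi (hc i hi) h0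
  rw [← hbj]
  exact hmem hb (two_pow_smul_psi_basis_mem_lambdaD b hi hj)

end CodeLattices

/-- The additive subgroup of `ℤ^n` generated by the union of all
Construction D sets `Λ_D` — over all bases `b` of `(ZMod 2)^n` whose first `k_i` vectors
span `C_i` — equals `Λ_CF`, the smallest additive subgroup containing `Γ_CF`. -/
theorem closure_iUnion_lambdaD_eq_lambdaCF {n a : ℕ}
    (C : ℕ → Submodule (ZMod 2) (Fin n → ZMod 2))
    (hmono : ∀ i < a, C i ≤ C (i + 1)) (htop : C a = ⊤) :
    AddSubgroup.closure
        (⋃ (b : Module.Basis (Fin n) (ZMod 2) (Fin n → ZMod 2)) (_ : SpansChain a C b),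
          LambdaD a C b)
      = AddSubgroup.closure (GammaCF a C) :=
  le_antisymm
    ((AddSubgroup.closure_le _).2 <| Set.iUnion₂_subset fun _ => lambdaD_subset_closure_gammaCF)
    ((AddSubgroup.closure_le _).2 <| gammaCF_subset_closure_iUnion_lambdaD hmono htop)
end
end

section
/- Let C_0 ⊆ C_1 ⊆ ... ⊆ C_{a-1} ⊆ C_a = (ZMod 2)^n be a family of nested binary linear codes. Then there exists a linear code C over 𝒰_a (a 𝒰_a-submodule of (Fin n → 𝒰_a)) such that Γ_A' = Γ_CF, where Γ_A' := { Φ(c) + 2^a l | c ∈ C, l ∈ ℤ^n } and Γ_CF is the real code formula set of the chain. -/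
noncomputable section

set_option synthInstance.maxHeartbeats 400000

/-- The quotient ring `𝒰_a = 𝔽₂[u]/u^a`. -/
abbrev Ua (a : ℕ) : Type :=
  Polynomial (ZMod 2) ⧸ Ideal.span {(Polynomial.X : Polynomial (ZMod 2)) ^ a}

/-- The image `u` of the variable `X` in `𝒰_a`. -/
noncomputable def uU (a : ℕ) : Ua a := Ideal.Quotient.mk _ Polynomial.X

/-- The canonical representative (of degree `< a`) of an element of `𝒰_a`. -/
noncomputable def uaRep {a : ℕ} (x : Ua a) : Polynomial (ZMod 2) :=
  Function.surjInv
    (Ideal.Quotient.mk_surjective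
      (I := Ideal.span {(Polynomial.X : Polynomial (ZMod 2)) ^ a})) x
    %ₘ (Polynomial.X ^ a)

/-- The coefficient `b_j` of `u^j` in `x = Σ_{j<a} b_j u^j ∈ 𝒰_a`. -/
noncomputable def uaCoeff {a : ℕ} (x : Ua a) (j : ℕ) : ZMod 2 := (uaRep x).coeff j

/-- The map `Φ : 𝒰_a → ℤ` sending `Σ_{j<a} b_j u^j` to `Σ_{j<a} ψ(b_j) 2^j`. -/
noncomputable def PhiU {a : ℕ} (x : Ua a) : ℤ :=
  ∑ j ∈ Finset.range a, ((uaCoeff x j).val : ℤ) * 2 ^ j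

/-- `Φ` extended componentwise to a map `(Fin n → 𝒰_a) → (Fin n → ℤ)`. -/
noncomputable def PhiV {n a : ℕ} (c : Fin n → Ua a) : Fin n → ℤ := fun k => PhiU (c k)

/-- The Construction A' set `Γ_{A'} = Φ(C) + 2^a ℤ^n` of a code `C ⊆ (Fin n → 𝒰_a)`. -/
def GammaA' {n a : ℕ} (C : Set (Fin n → Ua a)) : Set (Fin n → ℤ) :=
  { x | ∃ c ∈ C, ∃ l : Fin n → ℤ, x = PhiV c + (2 ^ a : ℤ) • l }

/-!
`Γ_CF` is the image under `Φ` of the binary code `N = {Σ_{i<a} u^i c_i | c_i ∈ C_i}`, since `Φ`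
reads off the `u`-adic digits of an element of `𝒰_a`. Because the chain is nested and `u^a = 0`,
multiplication by `u` maps `N` into itself (it shifts `(c_0, …, c_{a-1})` to `(0, c_0, …, c_{a-2})`),
and as `u` generates `𝒰_a` as an `𝔽₂`-algebra, `N` is a `𝒰_a`-submodule.
-/

open Polynomial Finset

theorem Polynomial.coeff_modByMonic_X_pow_of_lt {R : Type*} [Ring R] (p : R[X]) {a j : ℕ}
    (hj : j < a) : (p %ₘ X ^ a).coeff j = p.coeff j := by
  conv_rhs => rw [← modByMonic_add_div p (X ^ a)]
  rw [coeff_add, coeff_X_pow_mul', if_neg (not_le.2 hj), add_zero]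

theorem Submodule.smul_mem_of_adjoin_singleton_eq_top {R S M : Type*} [CommSemiring R]
    [Semiring S] [Algebra R S] [AddCommMonoid M] [Module R M] [Module S M]
    [IsScalarTower R S M] {u : S} (hu : Algebra.adjoin R {u} = ⊤) (p : Submodule R M)
    (hp : ∀ x ∈ p, u • x ∈ p) (s : S) {x : M} (hx : x ∈ p) : s • x ∈ p := by
  have hs : s ∈ Algebra.adjoin R {u} := hu ▸ Algebra.mem_top
  induction hs using Algebra.adjoin_induction generalizing x with
  | mem s hs => rw [Set.mem_singleton_iff.1 hs]; exact hp x hx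
  | algebraMap r => rw [algebraMap_smul]; exact p.smul_mem r hx
  | add s t _ _ hs ht => rw [add_smul]; exact p.add_mem (hs hx) (ht hx)
  | mul s t _ _ hs ht => rw [mul_smul]; exact hs (ht hx)

section Ua

variable {a : ℕ}

theorem uaRep_mk (p : (ZMod 2)[X]) :
    uaRep (Ideal.Quotient.mk (Ideal.span {X ^ a}) p) = p %ₘ X ^ a := by
  refine modByMonic_eq_of_dvd_sub (monic_X_pow a) (Ideal.mem_span_singleton.1 ?_)
  exact Ideal.Quotient.eq.1 (Function.surjInv_eq Ideal.Quotient.mk_surjective _)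

theorem uaCoeff_mk (p : (ZMod 2)[X]) {j : ℕ} (hj : j < a) :
    uaCoeff (Ideal.Quotient.mk (Ideal.span {X ^ a}) p) j = p.coeff j := by
  rw [uaCoeff, uaRep_mk, coeff_modByMonic_X_pow_of_lt p hj]

theorem uU_pow_self : uU a ^ a = 0 := by
  rw [uU, ← map_pow, Ideal.Quotient.eq_zero_iff_mem]
  exact Ideal.mem_span_singleton_self _

theorem adjoin_uU_eq_top : Algebra.adjoin (ZMod 2) {uU a} = ⊤ := by
  have h := (Algebra.adjoin_image (ZMod 2) (Ideal.Quotient.mkₐ (ZMod 2) (Ideal.span {X ^ a}))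
    {X}).trans (by rw [adjoin_X, Algebra.map_top])
  rwa [Set.image_singleton, (AlgHom.range_eq_top _).2 (Ideal.Quotient.mkₐ_surjective _ _),
    Ideal.Quotient.mkₐ_eq_mk] at h

theorem phiU_sum_algebraMap_mul_uU_pow (b : ℕ → ZMod 2) :
    PhiU (∑ i ∈ range a, algebraMap (ZMod 2) (Ua a) (b i) * uU a ^ i)
      = ∑ i ∈ range a, ((b i).val : ℤ) * 2 ^ i := by
  have hmk : ∑ i ∈ range a, algebraMap (ZMod 2) (Ua a) (b i) * uU a ^ i
      = Ideal.Quotient.mk _ (∑ i ∈ range a, C (b i) * X ^ i) := by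
    simp only [map_sum, map_mul, map_pow]
    rfl
  refine sum_congr rfl fun j hj => ?_
  rw [hmk, uaCoeff_mk _ (mem_range.1 hj), finsetSum_coeff]
  simp [hj]

end Ua

section CodeFormula

variable {n a : ℕ}

def codeFormulaMap (a : ℕ) : (ℕ → Fin n → ZMod 2) →ₗ[ZMod 2] (Fin n → Ua a) where
  toFun c k := ∑ i ∈ range a, algebraMap (ZMod 2) (Ua a) (c i k) * uU a ^ i
  map_add' c d := by ext k; simp [add_mul, sum_add_distrib]
  map_smul' r c := by
    ext k
    simp only [Pi.smul_apply, smul_sum, RingHom.id_apply]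
    exact sum_congr rfl fun i _ => by
      rw [smul_eq_mul, map_mul, mul_assoc]
      exact (Algebra.smul_def r _).symm

theorem phiV_codeFormulaMap (c : ℕ → Fin n → ZMod 2) :
    PhiV (codeFormulaMap a c) = ∑ i ∈ range a, (2 ^ i : ℤ) • psi (c i) := by
  ext k
  simp only [PhiV, codeFormulaMap, LinearMap.coe_mk, AddHom.coe_mk]
  rw [phiU_sum_algebraMap_mul_uU_pow]
  simp [psi, mul_comm]

theorem uU_smul_codeFormulaMap (c : ℕ → Fin n → ZMod 2) :
    uU a • codeFormulaMap a c = codeFormulaMap a (fun | 0 => 0 | i + 1 => c i) := by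
  ext k
  simp only [codeFormulaMap, LinearMap.coe_mk, AddHom.coe_mk, Pi.smul_apply, smul_eq_mul, mul_sum]
  set d : ℕ → Fin n → ZMod 2 := fun | 0 => 0 | i + 1 => c i
  symm
  calc ∑ i ∈ range a, algebraMap (ZMod 2) (Ua a) (d i k) * uU a ^ i
      = ∑ i ∈ range (a + 1), algebraMap (ZMod 2) (Ua a) (d i k) * uU a ^ i := by
        rw [sum_range_succ, uU_pow_self, mul_zero, add_zero]
    _ = ∑ i ∈ range a, uU a * (algebraMap (ZMod 2) (Ua a) (c i k) * uU a ^ i) := by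
        rw [sum_range_succ']
        simp only [d, pow_succ']
        simp [mul_left_comm]

def codeFormulaSubmodule (a : ℕ) (C : ℕ → Submodule (ZMod 2) (Fin n → ZMod 2)) :
    Submodule (ZMod 2) (Fin n → Ua a) :=
  (Submodule.pi (Set.Iio a) C).map (codeFormulaMap a)

theorem uU_smul_mem_codeFormulaSubmodule {C : ℕ → Submodule (ZMod 2) (Fin n → ZMod 2)}
    (hmono : ∀ i < a, C i ≤ C (i + 1)) {x : Fin n → Ua a}
    (hx : x ∈ codeFormulaSubmodule a C) : uU a • x ∈ codeFormulaSubmodule a C := by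
  obtain ⟨c, hc, rfl⟩ := hx
  refine ⟨_, fun i hi => ?_, (uU_smul_codeFormulaMap c).symm⟩
  cases i with
  | zero => exact (C 0).zero_mem
  | succ i => exact hmono i (Nat.lt_of_succ_lt hi) (hc i (Nat.lt_of_succ_lt hi))

end CodeFormula

theorem exists_code_gammaA'_eq_gammaCF_general {n a : ℕ}
    (C : ℕ → Submodule (ZMod 2) (Fin n → ZMod 2))
    (hmono : ∀ i < a, C i ≤ C (i + 1)) :
    ∃ M : Submodule (Ua a) (Fin n → Ua a),
      GammaA' (M : Set (Fin n → Ua a)) = GammaCF a C := by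
  let N := codeFormulaSubmodule a C
  refine ⟨{ N with
    smul_mem' := fun r _ hx => Submodule.smul_mem_of_adjoin_singleton_eq_top adjoin_uU_eq_top N
      (fun _ => uU_smul_mem_codeFormulaSubmodule hmono) r hx }, ?_⟩
  ext x
  simp [GammaA', GammaCF, N, codeFormulaSubmodule, phiV_codeFormulaMap]

/-- For any family of nested binary linear codes there exists a linear
code `C` over `𝒰_a = 𝔽₂[u]/u^a` (a `𝒰_a`-submodule of `(Fin n → 𝒰_a)`) such that the
Construction A' set `Γ_{A'} = Φ(C) + 2^a ℤ^n` equals the code formula set `Γ_CF`. -/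
theorem exists_code_gammaA'_eq_gammaCF {n a : ℕ}
    (C : ℕ → Submodule (ZMod 2) (Fin n → ZMod 2))
    (hmono : ∀ i < a, C i ≤ C (i + 1)) (htop : C a = ⊤) :
    ∃ M : Submodule (Ua a) (Fin n → Ua a),
      GammaA' (M : Set (Fin n → Ua a)) = GammaCF a C :=
  exists_code_gammaA'_eq_gammaCF_general C hmono
end
end

section
/- Let C_0 ⊆ C_1 ⊆ ... ⊆ C_{a-1} ⊆ (ZMod 2)^n be nested binary linear codes that are closed under Schur product (with C_a := (ZMod 2)^n), and let C := { Σ_{i=0}^{a-1} c_i u^i | c_i ∈ C_i } ⊆ (Fin n → 𝒰_a) be the associated code over 𝒰_a. Then C is closed under shifted Schur product: for all c_1, c_2 ∈ C, (c_1 ∗ c_2)·u ∈ C. -/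
noncomputable section

/-- The Schur (Hadamard) product on `𝒰_a`:
`(Σ_j x_j u^j) ∗ (Σ_j y_j u^j) = Σ_j (x_j y_j) u^j`. -/
noncomputable def schurU {a : ℕ} (x y : Ua a) : Ua a :=
  Ideal.Quotient.mk _
    (∑ j ∈ Finset.range a, Polynomial.C (uaCoeff x j * uaCoeff y j) * Polynomial.X ^ j)

/-- The code `C = C₀ + u C₁ + ... + u^{a-1} C_{a-1}` over `𝒰_a` associated to a chain
of binary codes: all vectors `Σ_{i<a} c_i u^i` with `c_i ∈ C_i`. -/
noncomputable def CodeSet {n : ℕ} (a : ℕ) (C : ℕ → Submodule (ZMod 2) (Fin n → ZMod 2)) :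
    Set (Fin n → Ua a) :=
  { x | ∃ c : ℕ → Fin n → ZMod 2,
      (∀ i < a, c i ∈ C i) ∧
      x = fun k => Ideal.Quotient.mk _
        (∑ i ∈ Finset.range a, Polynomial.C (c i k) * Polynomial.X ^ i) }

/-! For `c₁ = Σ cᵢ uⁱ` and `c₂ = Σ dᵢ uⁱ` the Schur product is `Σ (cᵢ dᵢ) uⁱ`, computed on the
canonical representatives; multiplying by `u` shifts it to `Σ (cᵢ₋₁ dᵢ₋₁) uⁱ`, dropping the
`uᵃ` term, and `cᵢ₋₁ dᵢ₋₁ ∈ Cᵢ` is exactly Schur closure of the chain. -/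

open Polynomial Finset

def shiftUp {R : Type*} [Zero R] (b : ℕ → R) : ℕ → R
  | 0 => 0
  | i + 1 => b i

section Semiring

variable {R : Type*} [Semiring R]

lemma coeff_sum_range_C_mul_X_pow (a : ℕ) (b : ℕ → R) (j : ℕ) :
    (∑ i ∈ range a, C (b i) * X ^ i).coeff j = if j < a then b j else 0 := by
  simp only [finsetSum_coeff, coeff_C_mul, coeff_X_pow, mul_ite, mul_one, mul_zero]
  simp

lemma degree_sum_range_C_mul_X_pow_lt (a : ℕ) (b : ℕ → R) :
    (∑ i ∈ range a, C (b i) * X ^ i).degree < (a : WithBot ℕ) := by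
  rw [degree_lt_iff_coeff_zero]
  intro j hj
  rw [coeff_sum_range_C_mul_X_pow, if_neg (by exact_mod_cast hj.not_gt)]

end Semiring

/-- The top coefficient is lost because `X ^ a = 0`. -/
lemma mk_sum_range_C_mul_X_pow_mul_X {R : Type*} [CommRing R] (a : ℕ) (b : ℕ → R) :
    Ideal.Quotient.mk (Ideal.span {X ^ a}) (∑ i ∈ range a, C (b i) * X ^ i) *
        Ideal.Quotient.mk _ X =
      Ideal.Quotient.mk _ (∑ i ∈ range a, C (shiftUp b i) * X ^ i) := by
  rw [← map_mul, Ideal.Quotient.eq, Ideal.mem_span_singleton]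
  cases a with
  | zero => simp
  | succ m =>
    refine ⟨C (b m), ?_⟩
    rw [sum_range_succ (fun i => C (b i) * X ^ i),
      sum_range_succ' (fun i => C (shiftUp b i) * X ^ i)]
    simp only [shiftUp, map_zero, zero_mul, add_zero, add_mul, sum_mul, pow_succ, mul_assoc]
    ring

lemma uaRep_mk_of_degree_lt {a : ℕ} {p : Polynomial (ZMod 2)} (hp : p.degree < a) :
    uaRep (Ideal.Quotient.mk _ p : Ua a) = p := by
  have hrep := Function.surjInv_eq
    (Ideal.Quotient.mk_surjective (I := Ideal.span {(X : Polynomial (ZMod 2)) ^ a}))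
    (Ideal.Quotient.mk _ p)
  rw [Ideal.Quotient.eq, Ideal.mem_span_singleton] at hrep
  rw [uaRep, modByMonic_eq_of_dvd_sub (monic_X_pow a) hrep,
    (modByMonic_eq_self_iff (monic_X_pow a)).mpr (by rwa [degree_X_pow])]

lemma uaCoeff_mk_sum_range (a : ℕ) (b : ℕ → ZMod 2) {j : ℕ} (hj : j < a) :
    uaCoeff (Ideal.Quotient.mk _ (∑ i ∈ range a, C (b i) * X ^ i) : Ua a) j = b j := by
  rw [uaCoeff, uaRep_mk_of_degree_lt (degree_sum_range_C_mul_X_pow_lt a b),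
    coeff_sum_range_C_mul_X_pow, if_pos hj]

lemma schurU_mk_sum_range (a : ℕ) (b c : ℕ → ZMod 2) :
    schurU (Ideal.Quotient.mk _ (∑ i ∈ range a, C (b i) * X ^ i) : Ua a)
        (Ideal.Quotient.mk _ (∑ i ∈ range a, C (c i) * X ^ i)) =
      Ideal.Quotient.mk _ (∑ i ∈ range a, C (b i * c i) * X ^ i) := by
  rw [schurU]
  congr 1
  refine sum_congr rfl fun j hj => ?_
  rw [uaCoeff_mk_sum_range a b (mem_range.mp hj), uaCoeff_mk_sum_range a c (mem_range.mp hj)]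

theorem codeSet_shifted_schur_general {n a : ℕ}
    (C : ℕ → Submodule (ZMod 2) (Fin n → ZMod 2))
    (hschur : ∀ i < a, ∀ c ∈ C i, ∀ d ∈ C i, c * d ∈ C (i + 1)) :
    ∀ c₁ ∈ CodeSet a C, ∀ c₂ ∈ CodeSet a C,
      (fun k => schurU (c₁ k) (c₂ k) * uU a) ∈ CodeSet a C := by
  rintro _ ⟨c, hc, rfl⟩ _ ⟨d, hd, rfl⟩
  refine ⟨shiftUp fun i => c i * d i, ?_, ?_⟩
  · rintro (_ | i) hi
    · exact zero_mem _
    · exact hschur i (by omega) _ (hc i (by omega)) _ (hd i (by omega))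
  · funext k
    rw [schurU_mk_sum_range, uU, mk_sum_range_C_mul_X_pow_mul_X]
    refine congrArg _ (sum_congr rfl ?_)
    rintro (_ | i) _ <;> rfl

/-- If the nested binary codes `C₀ ⊆ ... ⊆ C_{a-1}` are closed under
Schur product (with `C_a = (ZMod 2)^n`), then the associated code
`C = C₀ + u C₁ + ... + u^{a-1} C_{a-1}` over `𝒰_a` is closed under shifted Schur
product: `(c₁ ∗ c₂)·u ∈ C` for all `c₁, c₂ ∈ C`. -/
theorem codeSet_shifted_schur {n a : ℕ}
    (C : ℕ → Submodule (ZMod 2) (Fin n → ZMod 2))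
    (hmono : ∀ i < a, C i ≤ C (i + 1)) (htop : C a = ⊤)
    (hschur : ∀ i < a, ∀ c ∈ C i, ∀ d ∈ C i, c * d ∈ C (i + 1)) :
    ∀ c₁ ∈ CodeSet a C, ∀ c₂ ∈ CodeSet a C,
      (fun k => schurU (c₁ k) (c₂ k) * uU a) ∈ CodeSet a C :=
  codeSet_shifted_schur_general C hschur
end
end
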